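/- Let f : ℝⁿ → ℝⁿ be a super-linearizable polynomial vector field and let c ∈ ℝⁿ. Then the polynomial vector field h : ℝⁿ → ℝⁿ defined by h(z) = f(z + c) (the dynamics of z = x − c when ẋ = f(x)) is super-linearizable. -/

import Mathlib

open Matrix MvPolynomial

/-- A map between finite-dimensional real coordinate spaces is polynomial if each
component is given by a real multivariate polynomial. -/
def IsPolyMap {n m : ℕ} (f : (Fin n → ℝ) → (Fin m → ℝ)) : Prop :=
  ∃ P : Fin m → MvPolynomial (Fin n) ℝ, ∀ x i, f x i = MvPolynomial.eval x (P i)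

/-- A vector field `f : ℝⁿ → ℝⁿ` is super-linearizable if there are `k ∈ ℕ`, a matrix
`A ∈ ℝ^{(n+k)×(n+k)}` and a polynomial map `p : ℝⁿ → ℝᵏ` such that every solution of
`ẋ = f(x)` starting at `x₀` is, for `t ≥ 0`, the projection on the first `n` coordinates
of `t ↦ exp(tA)·(x₀, p(x₀))`. -/
def IsSuperLinearizable {n : ℕ} (f : (Fin n → ℝ) → (Fin n → ℝ)) : Prop :=
  ∃ (k : ℕ) (A : Matrix (Fin (n + k)) (Fin (n + k)) ℝ)
    (p : (Fin n → ℝ) → (Fin k → ℝ)), IsPolyMap p ∧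
    ∀ (x₀ : Fin n → ℝ) (x : ℝ → (Fin n → ℝ)),
      x 0 = x₀ →
      (∀ t : ℝ, 0 ≤ t → HasDerivAt x (f (x t)) t) →
      ∀ t : ℝ, 0 ≤ t → ∀ i : Fin n,
        (NormedSpace.exp (t • A)).mulVec (Fin.append x₀ (p x₀)) (Fin.castAdd k i) = x t i

/-! Adjoin to the state a coordinate that is constantly `1`. In these homogeneous coordinates the
translation `z = x - c` becomes linear, so conjugating the block matrix `diag(A, 0)` of the
original linearization by it yields a linear system whose exponential maps
`(z₀, p(z₀ + c), 1)` to `(x(t) - c, *, 1)`. -/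

open NormedSpace
open scoped Nat

namespace IsPolyMap

variable {l m n : ℕ}

theorem comp {g : (Fin m → ℝ) → (Fin l → ℝ)} {f : (Fin n → ℝ) → (Fin m → ℝ)}
    (hg : IsPolyMap g) (hf : IsPolyMap f) : IsPolyMap (g ∘ f) := by
  obtain ⟨Q, hQ⟩ := hg
  obtain ⟨P, hP⟩ := hf
  refine ⟨fun i => bind₁ P (Q i), fun x i => ?_⟩
  change g (f x) i = eval₂Hom (RingHom.id ℝ) x (bind₁ P (Q i))
  rw [eval₂Hom_bind₁, hQ]
  congr
  funext j
  exact hP x j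

theorem append {f : (Fin n → ℝ) → (Fin m → ℝ)} {g : (Fin n → ℝ) → (Fin l → ℝ)}
    (hf : IsPolyMap f) (hg : IsPolyMap g) : IsPolyMap fun x => Fin.append (f x) (g x) := by
  obtain ⟨P, hP⟩ := hf
  obtain ⟨Q, hQ⟩ := hg
  refine ⟨Fin.append P Q, fun x i => ?_⟩
  cases i using Fin.addCases <;> simp [hP, hQ]

theorem const (v : Fin m → ℝ) : IsPolyMap fun _ : Fin n → ℝ => v :=
  ⟨fun i => C (v i), fun x i => by simp⟩

theorem add_const (c : Fin n → ℝ) : IsPolyMap fun z : Fin n → ℝ => z + c :=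
  ⟨fun i => X i + C (c i), fun x i => by simp⟩

end IsPolyMap

theorem Fin.append_add_append {α : Type*} [Add α] {a b : ℕ} (u u' : Fin a → α)
    (v v' : Fin b → α) : Fin.append u v + Fin.append u' v' = Fin.append (u + u') (v + v') := by
  ext j
  cases j using Fin.addCases <;> simp

namespace Matrix

section Translation

variable {ι R : Type*} [DecidableEq ι] [Ring R]

def translation (v : ι → R) : Matrix (ι ⊕ Fin 1) (ι ⊕ Fin 1) R :=
  fromBlocks 1 (replicateCol (Fin 1) v) 0 1

theorem translation_zero : translation (0 : ι → R) = 1 := by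
  simp [translation, fromBlocks_one]

variable [Fintype ι]

theorem translation_mulVec (v w : ι → R) :
    translation v *ᵥ Sum.elim w 1 = Sum.elim (w + v) 1 := by
  rw [translation, fromBlocks_mulVec]
  ext (i | i) <;> simp [mulVec, dotProduct, add_comm]

theorem translation_add (v w : ι → R) :
    translation (v + w) = translation v * translation w := by
  simp [translation, fromBlocks_multiply, add_comm]

def translationUnit (v : ι → R) : (Matrix (ι ⊕ Fin 1) (ι ⊕ Fin 1) R)ˣ where
  val := translation v
  inv := translation (-v)
  val_inv := by rw [← translation_add, add_neg_cancel, translation_zero]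
  inv_val := by rw [← translation_add, neg_add_cancel, translation_zero]

end Translation

section Exponential

variable {m n l 𝕂 : Type*} [Fintype m] [DecidableEq m] [Fintype n] [DecidableEq n]
  [Fintype l] [DecidableEq l] [RCLike 𝕂]

theorem exp_series_hasSum_exp (M : Matrix m m 𝕂) :
    HasSum (fun k => ((k ! : 𝕂))⁻¹ • M ^ k) (exp M) := by
  open scoped Norms.Operator in
  exact exp_series_hasSum_exp' M

theorem exp_fromBlocks_zero_zero (M : Matrix m m 𝕂) (N : Matrix n n 𝕂) :
    exp (fromBlocks M 0 0 N) = fromBlocks (exp M) 0 0 (exp N) := by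
  let blocks : Matrix m m 𝕂 × Matrix n n 𝕂 →+ Matrix (m ⊕ n) (m ⊕ n) 𝕂 :=
    { toFun x := fromBlocks x.1 0 0 x.2
      map_zero' := fromBlocks_zero
      map_add' x y := by simp [fromBlocks_add] }
  have hblocks : Continuous blocks :=
    continuous_fst.matrix_fromBlocks continuous_const continuous_const continuous_snd
  refine (exp_series_hasSum_exp _).unique ?_
  convert ((exp_series_hasSum_exp M).prodMk (exp_series_hasSum_exp N)).map blocks hblocks using 1
  · funext k
    simp [blocks, fromBlocks_diagonal_pow, fromBlocks_smul]
  · rfl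

theorem exp_reindex (e : m ≃ l) (M : Matrix m m 𝕂) :
    exp (reindex e e M) = reindex e e (exp M) := by
  open scoped Norms.Operator in
  exact (map_exp (reindexRingEquiv 𝕂 e) (continuous_id.matrix_reindex e e) M).symm

theorem exp_smul_reindex_mulVec_apply (e : m ≃ l) (M : Matrix m m 𝕂) (t : 𝕂) (v : l → 𝕂)
    (i : m) : (exp (t • reindex e e M) *ᵥ v) (e i) = (exp (t • M) *ᵥ (v ∘ e)) i := by
  rw [show t • reindex e e M = reindex e e (t • M) from rfl, exp_reindex, reindex_apply,
    submatrix_mulVec_equiv]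
  simp

theorem exp_smul_translation_conj_mulVec (A : Matrix m m 𝕂) (c w : m → 𝕂) (t : 𝕂) :
    exp (t • (translation (-c) * fromBlocks A 0 0 0 * translation c)) *ᵥ Sum.elim w 1 =
      Sum.elim (exp (t • A) *ᵥ (w + c) - c) 1 := by
  have hconj : t • (translation (-c) * fromBlocks A 0 0 0 * translation c) =
      (↑(translationUnit c)⁻¹ : Matrix (m ⊕ Fin 1) (m ⊕ Fin 1) 𝕂) * fromBlocks (t • A) 0 0 0 *
        (↑(translationUnit c) : Matrix (m ⊕ Fin 1) (m ⊕ Fin 1) 𝕂) := by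
    rw [show fromBlocks (t • A) 0 0 (0 : Matrix (Fin 1) (Fin 1) 𝕂) = t • fromBlocks A 0 0 0 by
      simp [fromBlocks_smul], Matrix.mul_smul, Matrix.smul_mul]
    rfl
  rw [hconj, exp_units_conj', exp_fromBlocks_zero_zero, exp_zero, ← mulVec_mulVec,
    ← mulVec_mulVec]
  simp [translationUnit, translation_mulVec, fromBlocks_mulVec, sub_eq_add_neg]

end Exponential

end Matrix

theorem superlinearizable_translation_general {n : ℕ}
    (f : (Fin n → ℝ) → (Fin n → ℝ))
    (hfsl : IsSuperLinearizable f) (c : Fin n → ℝ) :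
    IsSuperLinearizable (fun z => f (z + c)) := by
  obtain ⟨k, A, p, hp, hsol⟩ := hfsl
  let c' : Fin (n + k) → ℝ := Fin.append c 0
  let e : Fin (n + k) ⊕ Fin 1 ≃ Fin (n + (k + 1)) := finSumFinEquiv
  refine ⟨k + 1, reindex e e (translation (-c') * fromBlocks A 0 0 0 * translation c'),
    fun z => Fin.append (p (z + c)) 1, (hp.comp (.add_const c)).append (.const 1), ?_⟩
  intro z₀ z hz₀ hz t ht i
  have hx := hsol (z₀ + c) (z · + c) (by rw [hz₀]) (fun s hs => (hz s hs).add_const c) t ht i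
  have hw : Fin.append z₀ (Fin.append (p (z₀ + c)) 1) ∘ e =
      Sum.elim (Fin.append z₀ (p (z₀ + c))) 1 := by
    rw [← Fin.append_comp_sumElim, Fin.append_assoc]
    rfl
  calc _ = (exp (t • (translation (-c') * fromBlocks A 0 0 0 * translation c')) *ᵥ
        Sum.elim (Fin.append z₀ (p (z₀ + c))) 1) (Sum.inl (Fin.castAdd k i)) := by
        rw [← hw]
        exact exp_smul_reindex_mulVec_apply e _ t _ (Sum.inl (Fin.castAdd k i))
    _ = (exp (t • A) *ᵥ Fin.append (z₀ + c) (p (z₀ + c))) (Fin.castAdd k i) - c i := by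
        simp [exp_smul_translation_conj_mulVec, c', Fin.append_add_append]
    _ = z t i := by simp [hx]

/-- Super-linearizability is preserved under translations: if `f` is super-linearizable
and `c ∈ ℝⁿ`, then `h(z) = f(z + c)` is super-linearizable. -/
theorem superlinearizable_translation {n : ℕ}
    (f : (Fin n → ℝ) → (Fin n → ℝ))
    (hfpoly : IsPolyMap f) (hfsl : IsSuperLinearizable f) (c : Fin n → ℝ) :
    IsSuperLinearizable (fun z => f (z + c)) :=
  superlinearizable_translation_general f hfsl c
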